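/- Emptiness of ⊥: In MimIR's type system without axiom declarations, the type ⊥ has no closed inhabitants among values; that is, there is no value v with · ⊢ v : ⊥ derivable in the empty environment. -/

import Mathlib

set_option autoImplicit true
set_option relaxedAutoImplicit true

namespace MimIR

/-- Expressions of MimIR's core calculus (Figure 2), in de Bruijn representation.
    Binders: `axm T e` binds in `e`; `letE e b` binds in `b`; `pi T U` binds in `U`;
    `lam T f U b` binds in `f`, `U`, `b`; `arr n T` binds in `T`; `pack n e` binds in `e`;
    `sig Ts` is a telescope (each element binds in all later ones). -/
inductive Expr : Type
  | sort    : ℕ → Expr                          -- Sort s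
  | bot     : Expr                              -- ⊥
  | nat     : Expr                              -- Nat
  | idx     : Expr                              -- Idx
  | litN    : ℕ → Expr                          -- natural number literal n
  | litI    : ℕ → ℕ → Expr                      -- index literal i_n
  | var     : ℕ → Expr                          -- variable (de Bruijn index)
  | axm     : Expr → Expr → Expr                -- axm x:T; e
  | letE    : Expr → Expr → Expr                -- let x = e; b
  | pi      : Expr → Expr → Expr                -- [x:T] → U
  | lam     : Expr → Expr → Expr → Expr → Expr  -- λ x:T @ f : U = b
  | app     : Expr → Expr → Expr                -- e e
  | sig     : List Expr → Expr                  -- [x₀:T₀, …, x_{n-1}:T_{n-1}]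
  | tup     : List Expr → Expr                  -- (e₀, …, e_{n-1})
  | arr     : Expr → Expr → Expr                -- ⟨x:eₙ; T⟩
  | pack    : Expr → Expr → Expr                -- ⟨x:eₙ; e⟩
  | extract : Expr → Expr → Expr                -- e#eᵢ

/-- The Boolean literal tt (= 1₂). -/
def ttLit : Expr := .litI 1 2

/-- The type Bool (= Idx 2). -/
def boolTy : Expr := .app .idx (.litN 2)

/-! ### Lifting (shift of free de Bruijn variables ≥ cutoff by one) -/

mutual
inductive Lift : ℕ → Expr → Expr → Prop
  | sort    : Lift c (.sort s) (.sort s)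
  | bot     : Lift c .bot .bot
  | nat     : Lift c .nat .nat
  | idx     : Lift c .idx .idx
  | litN    : Lift c (.litN n) (.litN n)
  | litI    : Lift c (.litI i n) (.litI i n)
  | varLt   : k < c → Lift c (.var k) (.var k)
  | varGe   : c ≤ k → Lift c (.var k) (.var (k+1))
  | axm     : Lift c T T' → Lift (c+1) e e' → Lift c (.axm T e) (.axm T' e')
  | letE    : Lift c e e' → Lift (c+1) b b' → Lift c (.letE e b) (.letE e' b')
  | pi      : Lift c T T' → Lift (c+1) U U' → Lift c (.pi T U) (.pi T' U')
  | lam     : Lift c T T' → Lift (c+1) f f' → Lift (c+1) U U' → Lift (c+1) b b' →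
              Lift c (.lam T f U b) (.lam T' f' U' b')
  | app     : Lift c f f' → Lift c a a' → Lift c (.app f a) (.app f' a')
  | sig     : LiftTele c Ts Ts' → Lift c (.sig Ts) (.sig Ts')
  | tup     : LiftFlat c es es' → Lift c (.tup es) (.tup es')
  | arr     : Lift c en en' → Lift (c+1) T T' → Lift c (.arr en T) (.arr en' T')
  | pack    : Lift c en en' → Lift (c+1) e e' → Lift c (.pack en e) (.pack en' e')
  | extract : Lift c e e' → Lift c i i' → Lift c (.extract e i) (.extract e' i')

inductive LiftFlat : ℕ → List Expr → List Expr → Prop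
  | nil  : LiftFlat c [] []
  | cons : Lift c e e' → LiftFlat c es es' → LiftFlat c (e :: es) (e' :: es')

inductive LiftTele : ℕ → List Expr → List Expr → Prop
  | nil  : LiftTele c [] []
  | cons : Lift c T T' → LiftTele (c+1) Ts Ts' → LiftTele c (T :: Ts) (T' :: Ts')
end

/-- `LiftTimes k e e'`: `e'` is `e` with all free variables shifted up by `k`. -/
inductive LiftTimes : ℕ → Expr → Expr → Prop
  | zero : LiftTimes 0 e e
  | succ : LiftTimes k e e' → Lift 0 e' e'' → LiftTimes (k+1) e e''

/-- `HasVar k e`: the de Bruijn variable `k` occurs free in `e`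
    (used to distinguish parametric from non-parametric binders). -/
inductive HasVar : ℕ → Expr → Prop
  | var      : HasVar k (.var k)
  | axm₁     : HasVar k T → HasVar k (.axm T e)
  | axm₂     : HasVar (k+1) e → HasVar k (.axm T e)
  | letE₁    : HasVar k e → HasVar k (.letE e b)
  | letE₂    : HasVar (k+1) b → HasVar k (.letE e b)
  | pi₁      : HasVar k T → HasVar k (.pi T U)
  | pi₂      : HasVar (k+1) U → HasVar k (.pi T U)
  | lamT     : HasVar k T → HasVar k (.lam T f U b)
  | lamF     : HasVar (k+1) f → HasVar k (.lam T f U b)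
  | lamU     : HasVar (k+1) U → HasVar k (.lam T f U b)
  | lamB     : HasVar (k+1) b → HasVar k (.lam T f U b)
  | app₁     : HasVar k f → HasVar k (.app f a)
  | app₂     : HasVar k a → HasVar k (.app f a)
  | sig      : Ts[i]? = some T → HasVar (k+i) T → HasVar k (.sig Ts)
  | tup      : e ∈ es → HasVar k e → HasVar k (.tup es)
  | arr₁     : HasVar k en → HasVar k (.arr en T)
  | arr₂     : HasVar (k+1) T → HasVar k (.arr en T)
  | pack₁    : HasVar k en → HasVar k (.pack en e)
  | pack₂    : HasVar (k+1) e → HasVar k (.pack en e)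
  | extract₁ : HasVar k e → HasVar k (.extract e i)
  | extract₂ : HasVar k i → HasVar k (.extract e i)

/-! ### Normalization ▷ and normalizing substitution (mutually defined) -/

mutual
/-- One application of a proper normalization rule of the relation ▷ (Figure 2),
    at the root of an expression assembled from already-normalized parts. -/
inductive Norm1 : Expr → Expr → Prop
  /-- N-Let -/
  | letE     : NSubst 0 e b b' → Norm1 (.letE e b) b'
  /-- N-Ex₁ -/
  | ex1      : Norm1 (.extract e (.litI 0 1)) e
  /-- N-Tup₁ -/
  | tup1     : Norm1 (.tup [e]) e
  /-- N-Sig₁ -/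
  | sig1     : Norm1 (.sig [T]) T
  /-- N-Pack₁ (the pack is non-parametric: its body is a lift) -/
  | pack1    : Lift 0 e e₁ → Norm1 (.pack (.litN 1) e₁) e
  /-- N-Arr₁ -/
  | arr1     : Lift 0 T T₁ → Norm1 (.arr (.litN 1) T₁) T
  /-- N-Tup_β -/
  | tupBeta  : es[i]? = some ei → Norm1 (.extract (.tup es) (.litI i es.length)) ei
  /-- N-Pack_β (extraction from a non-parametric pack, any index) -/
  | packBeta : Lift 0 e e₁ → Norm1 (.extract (.pack en e₁) ei) e
  /-- N-Tup_η -/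
  | tupEta   : 0 < n →
      Norm1 (.tup ((List.range n).map fun i => .extract e (.litI i n))) e
  /-- N-PackTup (compress an n-fold repeated tuple into a non-parametric pack) -/
  | packTup  : 1 < n → Lift 0 e e₁ →
      Norm1 (.tup (List.replicate n e)) (.pack (.litN n) e₁)
  /-- N-ArrSig (compress a homogeneous tuple type into a non-parametric array) -/
  | arrSig   : 1 < n → Ts.length = n → Lift 0 T T₁ →
      (∀ i Ti, Ts[i]? = some Ti → LiftTimes i T Ti) →
      Norm1 (.sig Ts) (.arr (.litN n) T₁)
  /-- N-SigArr (expand a parametric array of literal arity into a tuple type) -/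
  | sigArr   : HasVar 0 T → SubstEach T n 0 Us → Ts.length = n →
      (∀ i U V, Us[i]? = some U → Ts[i]? = some V → LiftTimes i U V) →
      Norm1 (.arr (.litN n) T) (.sig Ts)
  /-- N-TupPack (expand a parametric pack of literal arity into a tuple) -/
  | tupPack  : HasVar 0 e → SubstEach e n 0 es →
      Norm1 (.pack (.litN n) e) (.tup es)
  /-- N-β: β-reduce when the instantiated filter normalizes to tt -/
  | beta     : NSubst 0 ea f ttLit → NSubst 0 ea b b' →
      Norm1 (.app (.lam T f U b) ea) b'

/-- Either one normalization rule fires, or the expression stays as is (N-Id). -/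
inductive NormOpt : Expr → Expr → Prop
  | refl : NormOpt e e
  | step : Norm1 e e' → NormOpt e e'

/-- Normalizing substitution `e[a/j] = r`: replace variable `j` by `a` in `e`,
    normalizing every expression assembled along the way. -/
inductive NSubst : ℕ → Expr → Expr → Expr → Prop
  | sort    : NSubst j a (.sort s) (.sort s)
  | bot     : NSubst j a .bot .bot
  | nat     : NSubst j a .nat .nat
  | idx     : NSubst j a .idx .idx
  | litN    : NSubst j a (.litN n) (.litN n)
  | litI    : NSubst j a (.litI i n) (.litI i n)
  | varLt   : k < j → NSubst j a (.var k) (.var k)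
  | varEq   : NSubst j a (.var j) a
  | varGt   : j < k → NSubst j a (.var k) (.var (k-1))
  | axm     : NSubst j a T T' → Lift 0 a a₁ → NSubst (j+1) a₁ e e' →
      NormOpt (.axm T' e') r → NSubst j a (.axm T e) r
  | letE    : NSubst j a e e' → Lift 0 a a₁ → NSubst (j+1) a₁ b b' →
      NormOpt (.letE e' b') r → NSubst j a (.letE e b) r
  | pi      : NSubst j a T T' → Lift 0 a a₁ → NSubst (j+1) a₁ U U' →
      NormOpt (.pi T' U') r → NSubst j a (.pi T U) r
  | lam     : NSubst j a T T' → Lift 0 a a₁ →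
      NSubst (j+1) a₁ f f' → NSubst (j+1) a₁ U U' → NSubst (j+1) a₁ b b' →
      NormOpt (.lam T' f' U' b') r → NSubst j a (.lam T f U b) r
  | app     : NSubst j a f f' → NSubst j a e e' →
      NormOpt (.app f' e') r → NSubst j a (.app f e) r
  | sig     : NSubstTele j a Ts Ts' → NormOpt (.sig Ts') r → NSubst j a (.sig Ts) r
  | tup     : NSubstFlat j a es es' → NormOpt (.tup es') r → NSubst j a (.tup es) r
  | arr     : NSubst j a en en' → Lift 0 a a₁ → NSubst (j+1) a₁ T T' →
      NormOpt (.arr en' T') r → NSubst j a (.arr en T) r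
  | pack    : NSubst j a en en' → Lift 0 a a₁ → NSubst (j+1) a₁ e e' →
      NormOpt (.pack en' e') r → NSubst j a (.pack en e) r
  | extract : NSubst j a e e' → NSubst j a i i' →
      NormOpt (.extract e' i') r → NSubst j a (.extract e i) r

inductive NSubstFlat : ℕ → Expr → List Expr → List Expr → Prop
  | nil  : NSubstFlat j a [] []
  | cons : NSubst j a e e' → NSubstFlat j a es es' →
      NSubstFlat j a (e :: es) (e' :: es')

inductive NSubstTele : ℕ → Expr → List Expr → List Expr → Prop
  | nil  : NSubstTele j a [] []
  | cons : NSubst j a T T' → Lift 0 a a₁ → NSubstTele (j+1) a₁ Ts Ts' →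
      NSubstTele j a (T :: Ts) (T' :: Ts')

/-- `SubstEach e n i us`: `us = [e[i_n/x], e[(i+1)_n/x], …, e[(n-1)_n/x]]`. -/
inductive SubstEach : Expr → ℕ → ℕ → List Expr → Prop
  | nil  : SubstEach e n n []
  | cons : i < n → NSubst 0 (.litI i n) e u → SubstEach e n (i+1) us →
      SubstEach e n i (u :: us)
end

/-- A normalization rule fires somewhere inside the expression. -/
inductive NormIn : Expr → Expr → Prop
  | here     : Norm1 e e' → NormIn e e'
  | axm₁     : NormIn T T' → NormIn (.axm T e) (.axm T' e)
  | axm₂     : NormIn e e' → NormIn (.axm T e) (.axm T e')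
  | letE₁    : NormIn e e' → NormIn (.letE e b) (.letE e' b)
  | letE₂    : NormIn b b' → NormIn (.letE e b) (.letE e b')
  | pi₁      : NormIn T T' → NormIn (.pi T U) (.pi T' U)
  | pi₂      : NormIn U U' → NormIn (.pi T U) (.pi T U')
  | lamT     : NormIn T T' → NormIn (.lam T f U b) (.lam T' f U b)
  | lamF     : NormIn f f' → NormIn (.lam T f U b) (.lam T f' U b)
  | lamU     : NormIn U U' → NormIn (.lam T f U b) (.lam T f U' b)
  | lamB     : NormIn b b' → NormIn (.lam T f U b) (.lam T f U b')
  | app₁     : NormIn f f' → NormIn (.app f a) (.app f' a)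
  | app₂     : NormIn a a' → NormIn (.app f a) (.app f a')
  | sigC     : NormIn T T' → NormIn (.sig (l₁ ++ T :: l₂)) (.sig (l₁ ++ T' :: l₂))
  | tupC     : NormIn e e' → NormIn (.tup (l₁ ++ e :: l₂)) (.tup (l₁ ++ e' :: l₂))
  | arr₁     : NormIn en en' → NormIn (.arr en T) (.arr en' T)
  | arr₂     : NormIn T T' → NormIn (.arr en T) (.arr en T')
  | pack₁    : NormIn en en' → NormIn (.pack en e) (.pack en' e)
  | pack₂    : NormIn e e' → NormIn (.pack en e) (.pack en e')
  | extract₁ : NormIn e e' → NormIn (.extract e i) (.extract e' i)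
  | extract₂ : NormIn i i' → NormIn (.extract e i) (.extract e i')

/-- An expression is normalized iff no rule of ▷ rewrites it (anywhere). -/
def Normalized (e : Expr) : Prop := ∀ e', ¬ NormIn e e'

/-! ### Single-step β-reduction (rules Beta and Cong, with evaluation contexts ℰ) -/

inductive Step : Expr → Expr → Prop
  /-- Beta: (λ x:T@e_f:U = e_b) e_a → e_b[e_a/x] (normalizing substitution) -/
  | beta     : NSubst 0 ea b b' → Step (.app (.lam T f U b) ea) b'
  -- Cong, for every evaluation context ℰ:
  | axm₁     : Step T T' → Step (.axm T e) (.axm T' e)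
  | axm₂     : Step e e' → Step (.axm T e) (.axm T e')
  | pi₁      : Step T T' → Step (.pi T U) (.pi T' U)
  | pi₂      : Step U U' → Step (.pi T U) (.pi T U')
  | lamT     : Step T T' → Step (.lam T f U b) (.lam T' f U b)
  | lamU     : Step U U' → Step (.lam T f U b) (.lam T f U' b)
  | lamB     : Step b b' → Step (.lam T f U b) (.lam T f U b')
  | app₁     : Step f f' → Step (.app f a) (.app f' a)
  | app₂     : Step a a' → Step (.app f a) (.app f a')
  | sigC     : Step T T' → Step (.sig (l₁ ++ T :: l₂)) (.sig (l₁ ++ T' :: l₂))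
  | tupC     : Step e e' → Step (.tup (l₁ ++ e :: l₂)) (.tup (l₁ ++ e' :: l₂))
  | arr₁     : Step en en' → Step (.arr en T) (.arr en' T)
  | arr₂     : Step T T' → Step (.arr en T) (.arr en T')
  | pack₁    : Step en en' → Step (.pack en e) (.pack en' e)
  | pack₂    : Step e e' → Step (.pack en e) (.pack en e')
  | extract₁ : Step e e' → Step (.extract e i) (.extract e' i)
  | extract₂ : Step i i' → Step (.extract e i) (.extract e i')

/-- β-equivalence: the least equivalence relation containing single-step reduction. -/
inductive BetaEq : Expr → Expr → Prop
  | step  : Step e e' → BetaEq e e'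
  | refl  : BetaEq e e
  | symm  : BetaEq e e' → BetaEq e' e
  | trans : BetaEq e e' → BetaEq e' e'' → BetaEq e e''

/-- Values: normalized expressions in introduction form. -/
inductive Value : Expr → Prop
  | sort : Value (.sort s)
  | bot  : Value .bot
  | nat  : Value .nat
  | idx  : Value .idx
  | litN : Value (.litN n)
  | litI : Value (.litI i n)
  | pi   : Value (.pi T U)
  | sig  : Value (.sig Ts)
  | arr  : Value (.arr en T)
  | lam  : Value (.lam T f U b)
  | tup  : (∀ e ∈ es, Value e) → Value (.tup es)
  | pack : Value en → Value e → Value (.pack en e)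

/-- `Inst e n i T T'`: instantiate the `i` telescope variables of `T`
    (the type of the `i`-th element of an `n`-ary Σ-type) by the corresponding
    extractions `e#j_n`, as in rules Ex-S_L / Ex-S_i / A-Tup. -/
inductive Inst (e : Expr) (n : ℕ) : ℕ → Expr → Expr → Prop
  | zero : Inst e n 0 T T
  | succ : LiftTimes k (.extract e (.litI k n)) a → NSubst 0 a T T₁ →
      Inst e n k T₁ T' → Inst e n (k+1) T T'

/-! ### Typing and assignability.
    The Boolean index is `false` for the syntax-directed system Γ ⊢ e : T
    and `true` for Γ ⊢_β e : T (typing modulo β-equivalence of types). -/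

mutual
inductive Typing : Bool → List Expr → Expr → Expr → Prop
  /-- Sort -/
  | sort : Typing β Γ (.sort s) (.sort (s+1))
  /-- Bot -/
  | bot  : Typing β Γ .bot (.sort 0)
  /-- Nat -/
  | nat  : Typing β Γ .nat (.sort 0)
  /-- Idx -/
  | idx  : Typing β Γ .idx (.pi .nat (.sort 0))
  /-- Lit-N -/
  | litN : Typing β Γ (.litN n) .nat
  /-- Lit-I -/
  | litI : i < n → Typing β Γ (.litI i n) (.app .idx (.litN n))
  /-- Var -/
  | var  : Γ[k]? = some T → LiftTimes (k+1) T T' → Typing β Γ (.var k) T'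
  /-- Ax -/
  | axm  : Typing β Γ T (.sort s) → Typing β (T :: Γ) e U' → Lift 0 U U' →
      Typing β Γ (.axm T e) U
  /-- Pi -/
  | pi   : Typing β Γ T (.sort st) → Typing β (T :: Γ) U (.sort su) →
      Typing β Γ (.pi T U) (.sort (max st su))
  /-- Lam -/
  | lam  : Typing β (T :: Γ) f boolTy → Assignable β (T :: Γ) U b →
      Typing β Γ (.pi T U) (.sort s) →
      Typing β Γ (.lam T f U b) (.pi T U)
  /-- App -/
  | app  : Typing β Γ f (.pi T U) → Assignable β Γ T a → NSubst 0 a U U' →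
      Typing β Γ (.app f a) U'
  /-- Sig -/
  | sig  : SigWf β Γ Ts s → Typing β Γ (.sig Ts) (.sort s)
  /-- Tup -/
  | tup  : TupTyping β Γ 0 es Ts → NormOpt (.sig Ts) T → Typing β Γ T (.sort s) →
      Typing β Γ (.tup es) T
  /-- Arr -/
  | arr  : Typing β Γ en .nat → Typing β ((.app .idx en) :: Γ) T (.sort s) →
      Typing β Γ (.arr en T) (.sort s)
  /-- Pack -/
  | pack : Typing β Γ en .nat → Typing β ((.app .idx en) :: Γ) e T →
      NormOpt (.arr en T) U → Typing β Γ U (.sort s) →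
      Typing β Γ (.pack en e) U
  /-- Ex-A -/
  | exA  : Typing β Γ e (.arr en T) → Typing β Γ ei (.app .idx en) →
      NSubst 0 ei T T' → Typing β Γ (.extract e ei) T'
  /-- Ex-S_L -/
  | exSL : Typing β Γ e (.sig Ts) → Ts[i]? = some Ti →
      Inst e Ts.length i Ti T' →
      Typing β Γ (.extract e (.litI i Ts.length)) T'
  /-- Ex-S_i -/
  | exSI : Typing β Γ ei (.app .idx (.litN n)) → Typing β Γ e (.sig Ts) →
      Ts.length = n → TeleSorts β Γ Ts s → Us.length = n →
      (∀ j Tj Uj, Ts[j]? = some Tj → Us[j]? = some Uj → Inst e n j Tj Uj) →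
      NormOpt (.tup Us) T → NormOpt (.extract T ei) U →
      Typing β Γ (.extract e ei) U
  /-- Conversion (only in the system Γ ⊢_β e : T) -/
  | conv : Typing true Γ e T → BetaEq T T' → Typing true Γ e T'

inductive Assignable : Bool → List Expr → Expr → Expr → Prop
  /-- A-T -/
  | refl : Typing β Γ e T → Assignable β Γ T e
  /-- A-Tup -/
  | tup  : Us.length = Ts.length →
      (∀ i Ti Ui, Ts[i]? = some Ti → Us[i]? = some Ui → Inst e Ts.length i Ti Ui) →
      AssignList β Γ Ts.length 0 Us e →
      Assignable β Γ (.sig Ts) e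

/-- Successive assignability of the components `e#i_n` to the instantiated types. -/
inductive AssignList : Bool → List Expr → ℕ → ℕ → List Expr → Expr → Prop
  | nil  : AssignList β Γ n i [] e
  | cons : Assignable β Γ U (.extract e (.litI i n)) →
      AssignList β Γ n (i+1) Us e → AssignList β Γ n i (U :: Us) e

/-- Well-formedness of a Σ-type telescope, computing the maximum sort. -/
inductive SigWf : Bool → List Expr → List Expr → ℕ → Prop
  | nil  : SigWf β Γ [] 0
  | cons : Typing β Γ T (.sort st) → SigWf β (T :: Γ) Ts s →
      SigWf β Γ (T :: Ts) (max st s)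

/-- Typing of tuple components; the `i`-th component type is lifted by `i`
    to live inside the telescope of the resulting Σ-type. -/
inductive TupTyping : Bool → List Expr → ℕ → List Expr → List Expr → Prop
  | nil  : TupTyping β Γ i [] []
  | cons : Typing β Γ e T₀ → LiftTimes i T₀ T → TupTyping β Γ (i+1) es Ts →
      TupTyping β Γ i (e :: es) (T :: Ts)

/-- All element types of a telescope inhabit the same sort `s`. -/
inductive TeleSorts : Bool → List Expr → List Expr → ℕ → Prop
  | nil  : TeleSorts β Γ [] s
  | cons : Typing β Γ T (.sort s) → TeleSorts β (T :: Γ) Ts s →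
      TeleSorts β Γ (T :: Ts) s
end

/-- `e` contains no axiom declaration. -/
inductive AxmFree : Expr → Prop
  | sort    : AxmFree (.sort s)
  | bot     : AxmFree .bot
  | nat     : AxmFree .nat
  | idx     : AxmFree .idx
  | litN    : AxmFree (.litN n)
  | litI    : AxmFree (.litI i n)
  | var     : AxmFree (.var k)
  | letE    : AxmFree e → AxmFree b → AxmFree (.letE e b)
  | pi      : AxmFree T → AxmFree U → AxmFree (.pi T U)
  | lam     : AxmFree T → AxmFree f → AxmFree U → AxmFree b → AxmFree (.lam T f U b)
  | app     : AxmFree f → AxmFree a → AxmFree (.app f a)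
  | sig     : (∀ T ∈ Ts, AxmFree T) → AxmFree (.sig Ts)
  | tup     : (∀ e ∈ es, AxmFree e) → AxmFree (.tup es)
  | arr     : AxmFree en → AxmFree T → AxmFree (.arr en T)
  | pack    : AxmFree en → AxmFree e → AxmFree (.pack en e)
  | extract : AxmFree e → AxmFree i → AxmFree (.extract e i)

end MimIR

namespace MimIR

theorem NormOpt.sig_eq_of_bot {Ts : List Expr} (h : NormOpt (.sig Ts) .bot) : Ts = [.bot] := by
  rcases h with _ | ⟨⟨⟩⟩
  rfl

theorem NormOpt.arr_eq_of_bot {en T : Expr} (h : NormOpt (.arr en T) .bot) :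
    en = .litN 1 ∧ T = .bot := by
  cases h with
  | step h =>
    cases h with
    | arr1 hlift => cases hlift; exact ⟨rfl, rfl⟩

/-- Only N-Sig₁ and N-Arr₁ normalize a type former to `⊥`, so a tuple of type `⊥` is a singleton
of type `⊥`, and a pack of type `⊥` has a body of type `⊥`. -/
theorem Value.not_typing_bot {v : Expr} (hv : Value v) :
    ∀ {Γ : List Expr}, ¬ Typing false Γ v .bot := by
  induction hv with
  | tup _ ih =>
    intro Γ ht
    cases ht with
    | tup hcomps hnorm _ =>
      obtain rfl := hnorm.sig_eq_of_bot
      rcases hcomps with _ | ⟨he, ⟨⟩, ⟨⟩⟩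
      exact ih _ (List.mem_singleton_self _) he
  | pack _ _ _ ih =>
    intro Γ ht
    cases ht with
    | pack _ he hnorm _ =>
      obtain ⟨rfl, rfl⟩ := hnorm.arr_eq_of_bot
      exact ih he
  | _ => intro Γ ht; cases ht

/-- **Emptiness of ⊥**: in MimIR's type system without axiom declarations there is
    no closed inhabitant of `⊥` among values: no value `v` (containing no axiom
    declaration) satisfies `· ⊢ v : ⊥` in the empty environment. -/
theorem bot_has_no_value_inhabitant :
    ¬ ∃ v : Expr, Value v ∧ AxmFree v ∧ Typing false [] v .bot := by
  rintro ⟨v, hv, -, ht⟩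
  exact hv.not_typing_bot ht

end MimIR
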